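/- Conditions Y₁ and X₂ hold simultaneously if and only if all of the following hold: |a| = |b|; |β_R| = |β_L| = 1/√2; and there exists j₀ ∈ {2, 0, -2} such that α_{2 j₀} = α_{(-2) j₀} = 0, α_{0 j} = 0 for both j ≠ j₀, and |α_{2 j}| = |α_{(-2) j}| for both j ≠ j₀ (that is, H̃₂ belongs to the set 𝐇 of 3×3 unitary matrices of shape [p r 0; 0 0 t; q s 0], [p 0 r; 0 t 0; q 0 s], or [0 p r; t 0 0; 0 q s] with |p| = |q|, with respect to the ordering 2, 0, -2 of indices). -/

import Mathlib

/-!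
The columns `η_R`, `η_L` of `H₁` form an orthonormal basis, so `D η_R ∈ ℂ η_L` iff
`⟪η_R, D η_R⟫ = 0`, and symmetrically. For `D = diag(A, B)`, and since `|b| = |c|`, `|d| = |a|`,
these say `A|a|² + B|c|² = 0 = A|c|² + B|a|²`, which for `D ≠ 0` means `B = -A` and `|a| = |c|`,
i.e. `|a| = |b|`. So `Y₁` amounts to `|a| = |b|` and `A_j = -B_j ≠ 0` for all `j`.

Row `0` of the unitary `H̃₂` has a nonzero entry `α_{0 j₀}`; then `A_{j₀} + B_{j₀} = 0` forces
`β_R, β_L ≠ 0`, so `X₂` kills `α_{2 j₀}` and `α_{-2 j₀}`, and `A_{j₀} + B_{j₀} = 0` becomes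
`|β_R| = |β_L|`. Column `j₀` is now supported on row `0`, so by unitarity row `0` is supported on
column `j₀`, and `A_j + B_j = 0` for `j ≠ j₀` reads `|α_{2 j}| = |α_{-2 j}|`.
-/

namespace Matrix

variable {R : Type*} [CommRing R] [StarRing R] {n : Type*} [Fintype n] [DecidableEq n]
  {U : Matrix n n R}

theorem sum_star_mul_of_mem_unitaryGroup (hU : U ∈ unitaryGroup n R) (j k : n) :
    ∑ i, star (U i j) * U i k = (1 : Matrix n n R) j k := by
  rw [← mem_unitaryGroup_iff'.mp hU, mul_apply]
  rfl

theorem sum_mul_star_of_mem_unitaryGroup (hU : U ∈ unitaryGroup n R) (i k : n) :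
    ∑ j, U i j * star (U k j) = (1 : Matrix n n R) i k := by
  rw [← mem_unitaryGroup_iff.mp hU, mul_apply]
  rfl

theorem exists_apply_ne_zero_of_mem_unitaryGroup [Nontrivial R] (hU : U ∈ unitaryGroup n R)
    (i : n) : ∃ j, U i j ≠ 0 := by
  by_contra! h
  simpa [h] using sum_mul_star_of_mem_unitaryGroup hU i i

theorem apply_eq_zero_of_col_supported (hU : U ∈ unitaryGroup n R) {i j₀ : n}
    (hcol : ∀ i', i' ≠ i → U i' j₀ = 0) {j : n} (hj : j ≠ j₀) : U i j = 0 := by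
  have hsupp : ∀ k, ∑ i', star (U i' j₀) * U i' k = star (U i j₀) * U i k := fun k =>
    Finset.sum_eq_single i (fun i' _ hi' => by rw [hcol i' hi', star_zero, zero_mul])
      (by simp)
  have hunit := sum_star_mul_of_mem_unitaryGroup hU j₀ j₀
  have horth := sum_star_mul_of_mem_unitaryGroup hU j₀ j
  rw [hsupp, one_apply_eq] at hunit
  rw [hsupp, one_apply_ne hj.symm] at horth
  linear_combination U i j₀ * horth - U i j * hunit

theorem fin_two_swap_mem_unitaryGroup {a b c d : R} (hU : !![a, b; c, d] ∈ unitaryGroup (Fin 2) R) :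
    !![b, a; d, c] ∈ unitaryGroup (Fin 2) R := by
  rw [mem_unitaryGroup_iff] at *
  rw [← hU]
  ext i k
  fin_cases i <;> fin_cases k <;> simp [mul_apply, add_comm]

theorem exists_smul_eq_iff_of_fin_two_mem_unitaryGroup {a b c d : R}
    (hU : !![a, b; c, d] ∈ unitaryGroup (Fin 2) R) (x y : R) :
    (∃ l : R, ![x, y] = l • ![b, d]) ↔ star a * x + star c * y = 0 := by
  have horth := sum_star_mul_of_mem_unitaryGroup hU 0 1
  have e00 := sum_mul_star_of_mem_unitaryGroup hU 0 0
  have e01 := sum_mul_star_of_mem_unitaryGroup hU 0 1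
  have e10 := sum_mul_star_of_mem_unitaryGroup hU 1 0
  have e11 := sum_mul_star_of_mem_unitaryGroup hU 1 1
  simp only [Fin.sum_univ_two, of_apply, cons_val', cons_val_zero, cons_val_one,
    cons_val_fin_one, one_apply_eq, one_apply_ne zero_ne_one, one_apply_ne one_ne_zero]
    at horth e00 e01 e10 e11
  simp only [smul_vec2, smul_eq_mul, vecCons_inj, and_true]
  constructor
  · rintro ⟨l, rfl, rfl⟩
    linear_combination l * horth
  · intro h
    exact ⟨star b * x + star d * y, by linear_combination a * h - x * e00 - y * e01,
      by linear_combination c * h - x * e10 - y * e11⟩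

section RCLike

variable {𝕜 : Type*} [RCLike 𝕜] {U : Matrix n n 𝕜}

theorem sum_norm_sq_col_of_mem_unitaryGroup (hU : U ∈ unitaryGroup n 𝕜) (j : n) :
    ∑ i, ‖U i j‖ ^ 2 = 1 := by
  have h := sum_star_mul_of_mem_unitaryGroup hU j j
  simp only [RCLike.star_def, RCLike.conj_mul, one_apply_eq] at h
  exact_mod_cast h

theorem sum_norm_sq_row_of_mem_unitaryGroup (hU : U ∈ unitaryGroup n 𝕜) (i : n) :
    ∑ j, ‖U i j‖ ^ 2 = 1 := by
  have h := sum_mul_star_of_mem_unitaryGroup hU i i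
  simp only [RCLike.star_def, RCLike.mul_conj, one_apply_eq] at h
  exact_mod_cast h

end RCLike

end Matrix

open Matrix

theorem mul_add_mul_eq_zero_iff {A B p q : ℝ} (hpq : p + q = 1) :
    ((A, B) ≠ (0, 0) ∧ A * p + B * q = 0 ∧ A * q + B * p = 0) ↔ A ≠ 0 ∧ B = -A ∧ p = q := by
  constructor
  · rintro ⟨hAB, hp, hq⟩
    have hB : B = -A := by linear_combination hp + hq - (A + B) * hpq
    have hA : A ≠ 0 := fun hA => hAB (by simp [hA, hB])
    exact ⟨hA, hB, mul_left_cancel₀ hA (by linear_combination hp - q * hB)⟩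
  · rintro ⟨hA, rfl, rfl⟩
    exact ⟨by simp [hA], by ring, by ring⟩

theorem diagonal_mulVec_mem_span_swap_iff {a b c d : ℂ}
    (hU : !![a, b; c, d] ∈ unitaryGroup (Fin 2) ℂ) (A B : ℝ) :
    ((A, B) ≠ (0, 0) ∧ ∃ l l' : ℂ,
        diagonal ![(A : ℂ), (B : ℂ)] *ᵥ ![a, c] = l • ![b, d] ∧
        diagonal ![(A : ℂ), (B : ℂ)] *ᵥ ![b, d] = l' • ![a, c]) ↔
      A ≠ 0 ∧ B = -A ∧ ‖a‖ = ‖b‖ := by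
  have hdiag (x y : ℂ) : diagonal ![(A : ℂ), (B : ℂ)] *ᵥ ![x, y] = ![A * x, B * y] := by
    ext i; fin_cases i <;> simp [mulVec_diagonal]
  have hform (x y : ℂ) :
      star x * (A * x) + star y * (B * y) = ((A * ‖x‖ ^ 2 + B * ‖y‖ ^ 2 : ℝ) : ℂ) := by
    push_cast
    rw [← Complex.conj_mul', ← Complex.conj_mul']
    simp only [Complex.star_def]
    ring
  have hcol₀ := sum_norm_sq_col_of_mem_unitaryGroup hU 0
  have hcol₁ := sum_norm_sq_col_of_mem_unitaryGroup hU 1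
  have hrow₀ := sum_norm_sq_row_of_mem_unitaryGroup hU 0
  simp only [Fin.sum_univ_two, of_apply, cons_val', cons_val_zero, cons_val_one,
    cons_val_fin_one] at hcol₀ hcol₁ hrow₀
  have hbc : ‖b‖ ^ 2 = ‖c‖ ^ 2 := by linarith
  have hda : ‖d‖ ^ 2 = ‖a‖ ^ 2 := by linarith
  simp only [exists_and_left, exists_and_right, hdiag,
    exists_smul_eq_iff_of_fin_two_mem_unitaryGroup hU,
    exists_smul_eq_iff_of_fin_two_mem_unitaryGroup (fin_two_swap_mem_unitaryGroup hU),
    hform, Complex.ofReal_eq_zero, hbc, hda]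
  rw [← sq_eq_sq₀ (norm_nonneg a) (norm_nonneg b), hbc]
  exact mul_add_mul_eq_zero_iff hcol₀

theorem eq_one_div_sqrt_two_iff {x : ℝ} (hx : 0 ≤ x) : x = 1 / √2 ↔ x ^ 2 = 1 / 2 := by
  rw [one_div, ← Real.sqrt_inv, eq_comm, Real.sqrt_eq_iff_eq_sq (by norm_num) hx, eq_comm, one_div]

def MemFamilyH (α : Matrix (Fin 3) (Fin 3) ℂ) : Prop :=
  ∃ j₀ : Fin 3, α 0 j₀ = 0 ∧ α 2 j₀ = 0 ∧
    (∀ j : Fin 3, j ≠ j₀ → α 1 j = 0) ∧ (∀ j : Fin 3, j ≠ j₀ → ‖α 0 j‖ = ‖α 2 j‖)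

section FamilyH

variable {α : Matrix (Fin 3) (Fin 3) ℂ} {βR βL : ℂ} {A B : Fin 3 → ℝ} {A' B' : Fin 3 → ℂ}

theorem norm_sq_eq_half_and_memFamilyH (hα : α ∈ unitaryGroup (Fin 3) ℂ)
    (hβ : ‖βR‖ ^ 2 + ‖βL‖ ^ 2 = 1)
    (hA : ∀ j, A j = ‖α 0 j‖ ^ 2 * ‖βR‖ ^ 2 - ‖α 1 j‖ ^ 2 * ‖βL‖ ^ 2)
    (hB : ∀ j, B j = ‖α 1 j‖ ^ 2 * ‖βR‖ ^ 2 - ‖α 2 j‖ ^ 2 * ‖βL‖ ^ 2)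
    (hAB : ∀ j, B j = -A j)
    (hA' : ∀ j, A' j = βR * α 0 j * starRingEnd ℂ (α 1 j * βL))
    (hB' : ∀ j, B' j = βR * α 1 j * starRingEnd ℂ (α 2 j * βL))
    (hX : ∀ j, A' j = 0 ∧ B' j = 0) :
    (‖βR‖ ^ 2 = 1 / 2 ∧ ‖βL‖ ^ 2 = 1 / 2) ∧ MemFamilyH α := by
  have hsum (j : Fin 3) :
      (‖α 0 j‖ ^ 2 + ‖α 1 j‖ ^ 2) * ‖βR‖ ^ 2 = (‖α 1 j‖ ^ 2 + ‖α 2 j‖ ^ 2) * ‖βL‖ ^ 2 := by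
    linear_combination hAB j - hA j - hB j
  obtain ⟨j₀, hj₀⟩ := exists_apply_ne_zero_of_mem_unitaryGroup hα 1
  have hpos : 0 < ‖α 1 j₀‖ ^ 2 := by positivity
  have hR : βR ≠ 0 := by
    rintro rfl
    have h := hsum j₀
    rw [norm_zero] at hβ h
    nlinarith [sq_nonneg ‖α 2 j₀‖]
  have hL : βL ≠ 0 := by
    rintro rfl
    have h := hsum j₀
    rw [norm_zero] at hβ h
    nlinarith [sq_nonneg ‖α 0 j₀‖]
  have hX₀ := hX j₀
  rw [hA', hB'] at hX₀
  obtain ⟨h0, h2⟩ : α 0 j₀ = 0 ∧ α 2 j₀ = 0 := by simpa [hR, hL, hj₀] using hX₀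
  have hRL : ‖βR‖ ^ 2 = ‖βL‖ ^ 2 := by
    have := hsum j₀
    rw [h0, h2, norm_zero] at this
    exact mul_left_cancel₀ hpos.ne' (by linear_combination this)
  have hrow (j : Fin 3) (hj : j ≠ j₀) : α 1 j = 0 :=
    apply_eq_zero_of_col_supported hα (fun i hi => by fin_cases i <;> simp_all) hj
  refine ⟨⟨by linarith, by linarith⟩, j₀, h0, h2, hrow, fun j hj => ?_⟩
  have := hsum j
  rw [hrow j hj, norm_zero, ← hRL] at this
  rw [← sq_eq_sq₀ (norm_nonneg _) (norm_nonneg _)]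
  nlinarith

theorem ne_zero_and_neg_and_eq_zero_of_memFamilyH (hα : α ∈ unitaryGroup (Fin 3) ℂ)
    (hR : ‖βR‖ ^ 2 = 1 / 2) (hL : ‖βL‖ ^ 2 = 1 / 2) (hH : MemFamilyH α)
    (hA : ∀ j, A j = ‖α 0 j‖ ^ 2 * ‖βR‖ ^ 2 - ‖α 1 j‖ ^ 2 * ‖βL‖ ^ 2)
    (hB : ∀ j, B j = ‖α 1 j‖ ^ 2 * ‖βR‖ ^ 2 - ‖α 2 j‖ ^ 2 * ‖βL‖ ^ 2)
    (hA' : ∀ j, A' j = βR * α 0 j * starRingEnd ℂ (α 1 j * βL))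
    (hB' : ∀ j, B' j = βR * α 1 j * starRingEnd ℂ (α 2 j * βL)) :
    (∀ j, A j ≠ 0 ∧ B j = -A j) ∧ ∀ j, A' j = 0 ∧ B' j = 0 := by
  obtain ⟨j₀, h0, h2, hrow, hnorm⟩ := hH
  have hcol := sum_norm_sq_col_of_mem_unitaryGroup hα
  simp only [Fin.sum_univ_three] at hcol
  rw [← forall_and]
  intro j
  simp only [hA, hB, hA', hB', hR, hL]
  by_cases hj : j = j₀
  · subst hj
    have h1 : ‖α 1 j‖ ^ 2 = 1 := by simpa [h0, h2] using hcol j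
    simp only [h0, h2, h1, norm_zero]
    norm_num
  · have h02 : ‖α 0 j‖ ^ 2 = 1 / 2 ∧ ‖α 2 j‖ ^ 2 = 1 / 2 := by
      have := hcol j
      rw [hrow j hj, norm_zero, hnorm j hj] at this
      rw [hnorm j hj]
      constructor <;> linarith
    simp only [hrow j hj, h02, norm_zero]
    norm_num

end FamilyH

/-- Rows and columns `0, 1, 2` of `α` stand for the indices `2, 0, -2`. -/
theorem conditionY1_and_X2_iff (a b c d : ℂ)
    (hH1 : !![a, b; c, d] ∈ Matrix.unitaryGroup (Fin 2) ℂ)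
    (α : Matrix (Fin 3) (Fin 3) ℂ) (hα : α ∈ Matrix.unitaryGroup (Fin 3) ℂ)
    (βR βL : ℂ) (hβ : ‖βR‖ ^ 2 + ‖βL‖ ^ 2 = 1)
    (A B : Fin 3 → ℝ) (A' B' : Fin 3 → ℂ)
    (hA : ∀ j, A j = ‖α 0 j‖ ^ 2 * ‖βR‖ ^ 2
        - ‖α 1 j‖ ^ 2 * ‖βL‖ ^ 2)
    (hB : ∀ j, B j = ‖α 1 j‖ ^ 2 * ‖βR‖ ^ 2
        - ‖α 2 j‖ ^ 2 * ‖βL‖ ^ 2)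
    (hA' : ∀ j, A' j = βR * α 0 j * starRingEnd ℂ (α 1 j * βL))
    (hB' : ∀ j, B' j = βR * α 1 j * starRingEnd ℂ (α 2 j * βL)) :
    ((∀ j : Fin 3, (A j, B j) ≠ (0, 0) ∧
        ∃ l l' : ℂ,
          (Matrix.diagonal ![(A j : ℂ), (B j : ℂ)]).mulVec ![a, c] = l • ![b, d] ∧
          (Matrix.diagonal ![(A j : ℂ), (B j : ℂ)]).mulVec ![b, d] = l' • ![a, c]) ∧
      (∀ j : Fin 3, A' j = 0 ∧ B' j = 0)) ↔
    (‖a‖ = ‖b‖ ∧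
      (‖βR‖ = 1 / Real.sqrt 2 ∧ ‖βL‖ = 1 / Real.sqrt 2) ∧
      (∃ j₀ : Fin 3, α 0 j₀ = 0 ∧ α 2 j₀ = 0 ∧
        (∀ j : Fin 3, j ≠ j₀ → α 1 j = 0) ∧
        (∀ j : Fin 3, j ≠ j₀ → ‖α 0 j‖ = ‖α 2 j‖))) := by
  simp only [diagonal_mulVec_mem_span_swap_iff hH1, eq_one_div_sqrt_two_iff (norm_nonneg _)]
  constructor
  · rintro ⟨hY, hX⟩
    exact ⟨(hY 0).2.2,
      norm_sq_eq_half_and_memFamilyH hα hβ hA hB (fun j => (hY j).2.1) hA' hB' hX⟩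
  · rintro ⟨hab, ⟨hR, hL⟩, hH⟩
    obtain ⟨hY, hX⟩ := ne_zero_and_neg_and_eq_zero_of_memFamilyH hα hR hL hH hA hB hA' hB'
    exact ⟨fun j => ⟨(hY j).1, (hY j).2, hab⟩, hX⟩
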